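/- Let A be an augmented algebra over a field k and B a subalgebra of A. Then every injective A-module restricts to an injective B-module if and only if A is flat as a right B-module. -/

import Mathlib

/-!
Extension of scalars `N ↦ A ⊗_B N` is left adjoint to restriction:
`Hom_A(A ⊗_B N, M) ≃ Hom_B(N, M)`. If `A ⊗_B -` preserves injections, a `B`-linear extension
problem into `M` becomes an `A`-linear one, which the injectivity of `M` over `A` solves.

Conversely, the character module `A^* = Hom_ℤ(A, ℚ/ℤ)` is an injective `A`-module, and the
characters of `A ⊗_B N` are the `B`-linear maps `N → A^*`. If `A^*` stays injective over `B`,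
every character of `A ⊗_B N` therefore extends along `A ⊗_B f` for an injection `f`, and since
characters separate points, `A ⊗_B f` is injective.
-/

open scoped TensorProduct

/-- The relation submodule defining the balanced tensor product `A ⊗_B N` as the quotient
of `A ⊗_ℤ N` by the relations `(a·b) ⊗ n = a ⊗ (b·n)` for `b ∈ B`. -/
def balancedRel (k A : Type) [Field k] [Ring A] [Algebra k A] (B : Subalgebra k A)
    (N : Type) [AddCommGroup N] [Module ↥B N] : Submodule ℤ (A ⊗[ℤ] N) :=
  Submodule.span ℤ
    {x : A ⊗[ℤ] N | ∃ (a : A) (n : N) (b : ↥B), x = (a * (b : A)) ⊗ₜ[ℤ] n - a ⊗ₜ[ℤ] (b • n)}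

abbrev BalancedTensor (k A : Type) [Field k] [Ring A] [Algebra k A] (B : Subalgebra k A)
    (N : Type) [AddCommGroup N] [Module B N] : Type :=
  (A ⊗[ℤ] N) ⧸ balancedRel k A B N

namespace BalancedTensor

variable {k A : Type} [Field k] [Ring A] [Algebra k A] {B : Subalgebra k A}
  {N N' P : Type} [AddCommGroup N] [AddCommGroup N'] [AddCommGroup P] [Module B N] [Module B N']

theorem mk_mul_tmul (a : A) (b : B) (n : N) :
    (Submodule.Quotient.mk ((a * b) ⊗ₜ[ℤ] n) : BalancedTensor k A B N) =
      Submodule.Quotient.mk (a ⊗ₜ[ℤ] (b • n)) :=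
  (Submodule.Quotient.eq _).2 (Submodule.subset_span ⟨a, n, b, rfl⟩)

theorem hom_ext {F G : BalancedTensor k A B N →ₗ[ℤ] P}
    (h : ∀ (a : A) (n : N), F (Submodule.Quotient.mk (a ⊗ₜ n)) =
      G (Submodule.Quotient.mk (a ⊗ₜ n))) : F = G :=
  Submodule.linearMap_qext _ (TensorProduct.ext' h)

def lift (F : A → N → P) (add_left : ∀ a a' n, F (a + a') n = F a n + F a' n)
    (add_right : ∀ a n n', F a (n + n') = F a n + F a n')
    (balanced : ∀ (a : A) (b : B) (n : N), F (a * b) n = F a (b • n)) :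
    BalancedTensor k A B N →ₗ[ℤ] P :=
  let F₂ : A →+ N →+ P := AddMonoidHom.mk' (fun a => AddMonoidHom.mk' (F a) (add_right a))
    fun a a' => AddMonoidHom.ext (add_left a a')
  (balancedRel k A B N).liftQ
    (TensorProduct.liftAddHom F₂ fun r a n => by rw [map_zsmul, map_zsmul]; rfl).toIntLinearMap <|
    Submodule.span_le.2 <| by
      rintro _ ⟨a, n, b, rfl⟩
      simp [F₂, balanced]

@[simp]
theorem lift_mk (F : A → N → P) (add_left add_right balanced) (a : A) (n : N) :
    lift (B := B) F add_left add_right balanced (Submodule.Quotient.mk (a ⊗ₜ n)) = F a n :=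
  rfl

def map (f : N →ₗ[B] N') : BalancedTensor k A B N →ₗ[ℤ] BalancedTensor k A B N' :=
  lift (fun a n => Submodule.Quotient.mk (a ⊗ₜ f n))
    (fun a a' n => by simp [TensorProduct.add_tmul])
    (fun a n n' => by simp [TensorProduct.tmul_add])
    (fun a b n => by simp [mk_mul_tmul])

variable (k B N) in
def mulLeft : A →+* Module.End ℤ (BalancedTensor k A B N) where
  toFun a' := lift (fun a n => Submodule.Quotient.mk ((a' * a) ⊗ₜ n))
    (fun a a'' n => by simp [mul_add, TensorProduct.add_tmul])
    (fun a n n' => by simp [TensorProduct.tmul_add])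
    (fun a b n => by simp [← mul_assoc, mk_mul_tmul])
  map_one' := hom_ext fun a n => by simp
  map_mul' a a' := hom_ext fun a'' n => by simp [mul_assoc]
  map_zero' := hom_ext fun a n => by simp
  map_add' a a' := hom_ext fun a'' n => by simp [add_mul, TensorProduct.add_tmul]

instance : Module A (BalancedTensor k A B N) := Module.compHom _ (mulLeft k B N)

theorem smul_mk (a' a : A) (n : N) :
    a' • (Submodule.Quotient.mk (a ⊗ₜ n) : BalancedTensor k A B N) =
      Submodule.Quotient.mk ((a' * a) ⊗ₜ n) :=
  rfl

section LinearOverA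

variable {M : Type} [AddCommGroup M] [Module A M]

def linearMapOfMk (F : BalancedTensor k A B N →ₗ[ℤ] M)
    (hF : ∀ a' a n, F (Submodule.Quotient.mk ((a' * a) ⊗ₜ n)) =
      a' • F (Submodule.Quotient.mk (a ⊗ₜ n))) :
    BalancedTensor k A B N →ₗ[A] M where
  toFun := F
  map_add' := F.map_add
  map_smul' a' := LinearMap.congr_fun
    (hom_ext (F := F ∘ₗ mulLeft k B N a') (G := DistribSMul.toLinearMap ℤ M a' ∘ₗ F) (hF a'))

def mapₗ (f : N →ₗ[B] N') : BalancedTensor k A B N →ₗ[A] BalancedTensor k A B N' :=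
  linearMapOfMk (map f) fun _ _ _ => rfl

def extend (φ : N →ₗ[B] M) : BalancedTensor k A B N →ₗ[A] M :=
  linearMapOfMk
    (lift (fun a n => a • φ n) (fun _ _ _ => add_smul ..) (fun _ _ _ => by simp)
      (fun a b n => by rw [φ.map_smul, Subalgebra.smul_def, mul_smul]))
    fun a' a n => mul_smul a' a (φ n)

def restrict (h : BalancedTensor k A B N →ₗ[A] M) : N →ₗ[B] M where
  toFun n := h (Submodule.Quotient.mk (1 ⊗ₜ n))
  map_add' n n' := by simp [TensorProduct.tmul_add]
  map_smul' b n := by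
    rw [RingHom.id_apply, Subalgebra.smul_def, ← map_smul, smul_mk, ← mk_mul_tmul, mul_one,
      one_mul]

@[simp]
theorem restrict_apply (h : BalancedTensor k A B N →ₗ[A] M) (n : N) :
    restrict h n = h (Submodule.Quotient.mk (1 ⊗ₜ n)) :=
  rfl

end LinearOverA

end BalancedTensor

/-- `Aᵐᵒᵖ` acts on `A` by right multiplication; through `A ≃+* (Aᵐᵒᵖ)ᵈᵐᵃ` this becomes a left
action of `A` on characters of `A`. -/
abbrev CharacterModule.rightModule {A : Type} [Ring A] : Module A (CharacterModule A) :=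
  Module.compHom (A →+ AddCircle (1 : ℚ)) (R := (Aᵐᵒᵖ)ᵈᵐᵃ) (RingEquiv.opOp A).toRingHom

attribute [local instance] CharacterModule.rightModule

namespace CharacterModule

variable {A : Type} [Ring A]

theorem rightModule_smul_apply (a x : A) (c : CharacterModule A) : (a • c) x = c (x * a) :=
  rfl

def coind {Y : Type} [AddCommGroup Y] [Module A Y] (c : CharacterModule Y) :
    Y →ₗ[A] CharacterModule A where
  toFun y := c.comp ((smulAddHom A Y).flip y)
  map_add' y y' := AddMonoidHom.ext fun a => by
    show c (a • (y + y')) = c (a • y) + c (a • y')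
    rw [smul_add, map_add]
  map_smul' a y := AddMonoidHom.ext fun x => by
    show c (x • a • y) = c ((x * a) • y)
    rw [mul_smul]

@[simp]
theorem coind_apply {Y : Type} [AddCommGroup Y] [Module A Y] (c : CharacterModule Y) (y : Y)
    (a : A) : coind c y a = c (a • y) :=
  rfl

theorem moduleInjective : Module.Injective A (CharacterModule A) where
  out X Y _ _ _ _ i hi φ := by
    obtain ⟨c, hc⟩ := (Module.Baer.of_divisible _).extension_property_addMonoidHom
      i.toAddMonoidHom hi ((AddMonoidHom.eval 1).comp φ.toAddMonoidHom)
    refine ⟨coind c, fun x => AddMonoidHom.ext fun a => ?_⟩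
    calc coind c (i x) a = c (i (a • x)) := congrArg c (i.map_smul a x).symm
      _ = φ (a • x) 1 := DFunLike.congr_fun hc (a • x)
      _ = φ x a := by rw [map_smul, rightModule_smul_apply, one_mul]

end CharacterModule

def Subalgebra.RightFlat {k A : Type} [Field k] [Ring A] [Algebra k A] (B : Subalgebra k A) :
    Prop :=
  ∀ ⦃N N' : Type⦄ [AddCommGroup N] [AddCommGroup N'] [Module B N] [Module B N']
    (f : N →ₗ[B] N'), Function.Injective f → Function.Injective (BalancedTensor.map (k := k) f)

namespace Subalgebra

open BalancedTensor CharacterModule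

variable {k A : Type} [Field k] [Ring A] [Algebra k A] {B : Subalgebra k A}

theorem rightFlat_of_moduleInjective_characterModule
    (h : Module.Injective B (CharacterModule A)) : B.RightFlat := by
  intro N N' _ _ _ _ f hf
  refine (injective_iff_map_eq_zero _).2 fun x hx => eq_zero_of_character_apply fun χ => ?_
  obtain ⟨ψ, hψ⟩ := h.out f hf (restrict (coind χ))
  have hχ : χ.toIntLinearMap =
      (AddMonoidHom.eval 1).toIntLinearMap ∘ₗ (extend ψ).restrictScalars ℤ ∘ₗ BalancedTensor.map f :=
    hom_ext fun a n => show χ _ = ψ (f n) (1 * a) by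
      rw [hψ, restrict_apply, coind_apply, smul_mk, one_mul, mul_one]
  calc χ x = extend ψ (BalancedTensor.map f x) 1 := LinearMap.congr_fun hχ x
    _ = 0 := by rw [hx, map_zero]; rfl

theorem RightFlat.moduleInjective {M : Type} [AddCommGroup M] [Module A M] (hB : B.RightFlat)
    (hM : Module.Injective A M) : Module.Injective B M where
  out X Y _ _ _ _ i hi φ := by
    obtain ⟨h, hh⟩ := hM.out (mapₗ i) (hB i hi) (extend φ)
    exact ⟨restrict h, fun x => (hh (Submodule.Quotient.mk (1 ⊗ₜ x))).trans (one_smul A (φ x))⟩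

end Subalgebra

theorem injective_restriction_iff_flat_general
    (k A : Type) [Field k] [Ring A] [Algebra k A]
    (B : Subalgebra k A) :
    (∀ (M : Type) [AddCommGroup M] [Module A M], Module.Injective A M →
        letI : Module ↥B M := Module.compHom M (B.val.toRingHom)
        Module.Injective ↥B M)
    ↔
    (∀ (N N' : Type) [AddCommGroup N] [AddCommGroup N'] [Module ↥B N] [Module ↥B N']
        (f : N →ₗ[↥B] N'), Function.Injective f →
        ∀ (g : ((A ⊗[ℤ] N) ⧸ balancedRel k A B N)
            →ₗ[ℤ] ((A ⊗[ℤ] N') ⧸ balancedRel k A B N')),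
          (∀ (a : A) (n : N), g (Submodule.Quotient.mk (a ⊗ₜ[ℤ] n))
              = Submodule.Quotient.mk (a ⊗ₜ[ℤ] f n)) →
          Function.Injective g) := by
  constructor
  · intro hres N N' _ _ _ _ f hf g hg
    obtain rfl : g = BalancedTensor.map f := BalancedTensor.hom_ext hg
    exact Subalgebra.rightFlat_of_moduleInjective_characterModule
      (hres (CharacterModule A) CharacterModule.moduleInjective) f hf
  · intro hflat M _ _ hM
    refine Subalgebra.RightFlat.moduleInjective (fun N N' _ _ _ _ f hf => ?_) hM
    exact hflat N N' f hf (BalancedTensor.map f) fun _ _ => rfl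

/-- Every injective left `A`-module restricts to an injective `B`-module if and only if
`A` is flat as a right `B`-module, i.e. for every injective map `f : N → N'` of left
`B`-modules the induced map `A ⊗_B N → A ⊗_B N'` is injective. -/
theorem injective_restriction_iff_flat
    (k A : Type) [Field k] [Ring A] [Algebra k A] (ε : A →ₐ[k] k)
    (B : Subalgebra k A) :
    (∀ (M : Type) [AddCommGroup M] [Module A M], Module.Injective A M →
        letI : Module ↥B M := Module.compHom M (B.val.toRingHom)
        Module.Injective ↥B M)
    ↔
    (∀ (N N' : Type) [AddCommGroup N] [AddCommGroup N'] [Module ↥B N] [Module ↥B N']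
        (f : N →ₗ[↥B] N'), Function.Injective f →
        ∀ (g : ((A ⊗[ℤ] N) ⧸ balancedRel k A B N)
            →ₗ[ℤ] ((A ⊗[ℤ] N') ⧸ balancedRel k A B N')),
          (∀ (a : A) (n : N), g (Submodule.Quotient.mk (a ⊗ₜ[ℤ] n))
              = Submodule.Quotient.mk (a ⊗ₜ[ℤ] f n)) →
          Function.Injective g) :=
  injective_restriction_iff_flat_general k A B
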